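/- Let B be a countable Boolean subalgebra of the Borel sets of 2^ω containing all clopen sets and contained in 𝔹 = {A Borel : lim_k k·χ_k(A) = 0}. Let (q_n)_{n∈ω} be a sequence of ultrafilters on B and (V_n)_{n∈ω} an antichain in B with V_n ∈ q_n for every n. Then there exist finite binary strings σ_n ∈ 2^{<ω} such that V_n ∩ [σ_n] ∈ q_n for every n and the union ∪_{n∈ω}(V_n ∩ [σ_n]) belongs to 𝔹. -/

import Mathlib

/-!
Let the lengths `m n` of the strings `σ n` grow so fast that `k * χ_k(V j)` is small for all
`j ≤ N` as soon as `k ≥ m N`. For `m N ≤ k < m (N + 1)` the pieces `V j ∩ [σ j]` with `j ≤ N`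
are then approximated in `F_k` as well as `V j` is, since `[σ j] ∈ F_k`, while all later pieces
lie in cylinders of total measure at most `2 * 2^(-m (N + 1))`, and `k * 2^(-m (N + 1))` is small
because `k < m (N + 1)`. The strings themselves are found bit by bit: each cylinder is the union of
its two one-bit extensions, so the ultrafilter contains the trace of `V n` on one of them.
-/

open MeasureTheory Filter Topology

/-- The cylinder in Cantor space determined by `σ : 2^n`. -/
def cyl (n : ℕ) (σ : Fin n → Bool) : Set (ℕ → Bool) := {x | ∀ i : Fin n, x i = σ i}

/-- The finite Boolean algebra `F_n` of unions of cylinders of length `n`. -/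
def FnAlg (n : ℕ) : Set (Set (ℕ → Bool)) :=
  {B | ∃ S : Set (Fin n → Bool), B = ⋃ σ ∈ S, cyl n σ}

/-- `χ_n(A) = min{λ(A △ B) : B ∈ F_n}`. -/
noncomputable def chi (lam : Measure (ℕ → Bool)) (n : ℕ) (A : Set (ℕ → Bool)) : ℝ :=
  sInf {r : ℝ | ∃ B ∈ FnAlg n, r = (lam (symmDiff A B)).toReal}

/-- The family `𝔹 = {A Borel : lim n·χ_n(A) = 0}`. -/
def BB (lam : Measure (ℕ → Bool)) : Set (Set (ℕ → Bool)) :=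
  {A | MeasurableSet A ∧
    Tendsto (fun n : ℕ => (n : ℝ) * chi lam n A) atTop (𝓝 0)}

/-- The cylinder determined by a finite binary string. -/
def cylL (s : List Bool) : Set (ℕ → Bool) :=
  {x | ∀ i : Fin s.length, x i = s.get i}

/-- An ultrafilter on a Boolean algebra `ℬ` of subsets of Cantor space. -/
def IsUltraOn (ℬ : Set (Set (ℕ → Bool))) (q : Set (Set (ℕ → Bool))) : Prop :=
  q ⊆ ℬ ∧ (∀ A ∈ q, ∀ B ∈ ℬ, A ⊆ B → B ∈ q) ∧
  (∀ A ∈ q, ∀ B ∈ q, A ∩ B ∈ q) ∧ (∀ A ∈ ℬ, A ∈ q ↔ Aᶜ ∉ q)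

open scoped symmDiff

def prefixFn (n : ℕ) (x : ℕ → Bool) : Fin n → Bool := fun i => x i

lemma continuous_prefixFn (n : ℕ) : Continuous (prefixFn n) :=
  continuous_pi fun i => continuous_apply (i : ℕ)

lemma cyl_eq_preimage (n : ℕ) (σ : Fin n → Bool) : cyl n σ = prefixFn n ⁻¹' {σ} := by
  ext x
  simp [cyl, prefixFn, funext_iff]

lemma isClopen_cyl (n : ℕ) (σ : Fin n → Bool) : IsClopen (cyl n σ) := by
  rw [cyl_eq_preimage]
  exact (isClopen_discrete _).preimage (continuous_prefixFn n)

lemma cylL_eq_cyl (s : List Bool) : cylL s = cyl s.length s.get := rfl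

lemma isClopen_cylL (s : List Bool) : IsClopen (cylL s) := isClopen_cyl _ _

lemma mem_cylL {s : List Bool} {x : ℕ → Bool} :
    x ∈ cylL s ↔ ∀ (i : ℕ) (hi : i < s.length), x i = s[i] :=
  ⟨fun h i hi => h ⟨i, hi⟩, fun h i => h i i.2⟩

@[simp] lemma cylL_nil : cylL [] = Set.univ := by
  ext x
  simp [mem_cylL]

lemma cylL_append_singleton (s : List Bool) (b : Bool) :
    cylL (s ++ [b]) = cylL s ∩ {x | x s.length = b} := by
  ext x
  simp only [mem_cylL, Set.mem_inter_iff, Set.mem_ofPred_eq]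
  constructor
  · intro h
    refine ⟨fun i hi => ?_, by simpa using h s.length (by simp)⟩
    rw [h i (by simp; omega), List.getElem_append_left hi]
  · rintro ⟨h, rfl⟩ i hi
    rcases Nat.lt_or_ge i s.length with hi' | hi'
    · rw [h i hi', List.getElem_append_left hi']
    · obtain rfl : i = s.length := by simp at hi; omega
      simp

lemma cylL_eq_union_append (s : List Bool) :
    cylL s = cylL (s ++ [false]) ∪ cylL (s ++ [true]) := by
  ext x
  cases h : x s.length <;> simp [cylL_append_singleton, h]

lemma FnAlg_eq_range (n : ℕ) : FnAlg n = Set.range fun S => prefixFn n ⁻¹' S := by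
  ext B
  simp only [FnAlg, cyl_eq_preimage, Set.biUnion_preimage_singleton, Set.mem_ofPred_eq,
    Set.mem_range, eq_comm]

lemma FnAlg_finite (n : ℕ) : (FnAlg n).Finite := by
  rw [FnAlg_eq_range]
  exact Set.finite_range _

lemma preimage_prefixFn_mem_FnAlg (n : ℕ) (S : Set (Fin n → Bool)) :
    prefixFn n ⁻¹' S ∈ FnAlg n := by
  rw [FnAlg_eq_range]
  exact ⟨S, rfl⟩

lemma empty_mem_FnAlg (n : ℕ) : (∅ : Set (ℕ → Bool)) ∈ FnAlg n :=
  preimage_prefixFn_mem_FnAlg n ∅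

lemma union_mem_FnAlg {n : ℕ} {A B : Set (ℕ → Bool)} (hA : A ∈ FnAlg n) (hB : B ∈ FnAlg n) :
    A ∪ B ∈ FnAlg n := by
  rw [FnAlg_eq_range] at hA hB
  obtain ⟨S, rfl⟩ := hA
  obtain ⟨T, rfl⟩ := hB
  exact preimage_prefixFn_mem_FnAlg n (S ∪ T)

lemma inter_mem_FnAlg {n : ℕ} {A B : Set (ℕ → Bool)} (hA : A ∈ FnAlg n) (hB : B ∈ FnAlg n) :
    A ∩ B ∈ FnAlg n := by
  rw [FnAlg_eq_range] at hA hB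
  obtain ⟨S, rfl⟩ := hA
  obtain ⟨T, rfl⟩ := hB
  exact preimage_prefixFn_mem_FnAlg n (S ∩ T)

lemma cyl_mem_FnAlg_of_le {n k : ℕ} (h : n ≤ k) (σ : Fin n → Bool) : cyl n σ ∈ FnAlg k :=
  preimage_prefixFn_mem_FnAlg k {τ | ∀ i, τ (Fin.castLE h i) = σ i}

lemma cylL_mem_FnAlg_of_length_le {s : List Bool} {k : ℕ} (h : s.length ≤ k) :
    cylL s ∈ FnAlg k :=
  cyl_mem_FnAlg_of_le h s.get

section Chi

variable (μ : Measure (ℕ → Bool)) (n : ℕ)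

lemma exists_chi_eq (A : Set (ℕ → Bool)) : ∃ B ∈ FnAlg n, chi μ n A = μ.real (A ∆ B) := by
  have hset : {r : ℝ | ∃ B ∈ FnAlg n, r = μ.real (A ∆ B)} =
      (fun B => μ.real (A ∆ B)) '' FnAlg n := by
    ext r
    simp only [Set.mem_ofPred_eq, Set.mem_image, eq_comm]
  have hmem := (Set.Nonempty.image _ ⟨∅, empty_mem_FnAlg n⟩).csInf_mem
    ((FnAlg_finite n).image fun B => μ.real (A ∆ B))
  rw [← hset] at hmem
  exact hmem

lemma chi_le {A B : Set (ℕ → Bool)} (hB : B ∈ FnAlg n) : chi μ n A ≤ μ.real (A ∆ B) := by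
  refine csInf_le ⟨0, ?_⟩ ⟨B, hB, rfl⟩
  rintro _ ⟨B', -, rfl⟩
  exact measureReal_nonneg

lemma chi_nonneg (A : Set (ℕ → Bool)) : 0 ≤ chi μ n A := by
  obtain ⟨B, -, h⟩ := exists_chi_eq μ n A
  exact h ▸ measureReal_nonneg

lemma chi_le_measureReal (A : Set (ℕ → Bool)) : chi μ n A ≤ μ.real A := by
  simpa [← Set.bot_eq_empty] using chi_le μ n (A := A) (empty_mem_FnAlg n)

variable [IsFiniteMeasure μ]

lemma chi_union_le (A A' : Set (ℕ → Bool)) : chi μ n (A ∪ A') ≤ chi μ n A + chi μ n A' := by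
  obtain ⟨B, hB, hAB⟩ := exists_chi_eq μ n A
  obtain ⟨B', hB', hAB'⟩ := exists_chi_eq μ n A'
  calc chi μ n (A ∪ A') ≤ μ.real ((A ∪ A') ∆ (B ∪ B')) := chi_le μ n (union_mem_FnAlg hB hB')
    _ ≤ μ.real (A ∆ B ∪ A' ∆ B') := measureReal_mono Set.union_symmDiff_union_subset
    _ ≤ chi μ n A + chi μ n A' := hAB ▸ hAB' ▸ measureReal_union_le _ _

lemma chi_biUnion_le {ι : Type*} (s : Finset ι) (A : ι → Set (ℕ → Bool)) :
    chi μ n (⋃ j ∈ s, A j) ≤ ∑ j ∈ s, chi μ n (A j) := by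
  classical
  induction s using Finset.induction with
  | empty => simpa using chi_le_measureReal μ n ∅
  | insert a s ha ih =>
    rw [Finset.set_biUnion_insert, Finset.sum_insert ha]
    exact (chi_union_le μ n _ _).trans (by gcongr)

lemma chi_inter_le {A C : Set (ℕ → Bool)} (hC : C ∈ FnAlg n) : chi μ n (A ∩ C) ≤ chi μ n A := by
  obtain ⟨B, hB, hAB⟩ := exists_chi_eq μ n A
  calc chi μ n (A ∩ C) ≤ μ.real ((A ∩ C) ∆ (B ∩ C)) := chi_le μ n (inter_mem_FnAlg hB hC)
    _ ≤ μ.real (A ∆ B) := by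
      rw [← Set.inter_symmDiff_distrib_right]
      exact measureReal_mono Set.inter_subset_left
    _ = chi μ n A := hAB.symm

lemma chi_iUnion_le (A : ℕ → Set (ℕ → Bool)) (N : ℕ) :
    chi μ n (⋃ j, A j) ≤ ∑ j ∈ Finset.range N, chi μ n (A j) + μ.real (⋃ i, A (N + i)) := by
  have hsplit : ⋃ j, A j = (⋃ j ∈ Finset.range N, A j) ∪ ⋃ i, A (N + i) := by
    ext x
    simp only [Set.mem_iUnion, Set.mem_union, Finset.mem_range, exists_prop]
    constructor
    · rintro ⟨j, hj⟩
      rcases lt_or_ge j N with h | h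
      · exact .inl ⟨j, h, hj⟩
      · exact .inr ⟨j - N, by rwa [Nat.add_sub_cancel' h]⟩
    · rintro (⟨j, -, hj⟩ | ⟨i, hi⟩) <;> exact ⟨_, ‹_›⟩
  rw [hsplit]
  exact (chi_union_le μ n _ _).trans
    (add_le_add (chi_biUnion_le μ n _ A) (chi_le_measureReal μ n _))

end Chi

lemma measureReal_iUnion_cylL_le {μ : Measure (ℕ → Bool)} [IsFiniteMeasure μ]
    (hμ : ∀ (n : ℕ) (σ : Fin n → Bool), μ (cyl n σ) = (1 / 2 : ENNReal) ^ n)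
    {m : ℕ → ℕ} (hm : StrictMono m) {σ : ℕ → List Bool} (hσ : ∀ n, (σ n).length = m n)
    (a : ℕ) : μ.real (⋃ i, cylL (σ (a + i))) ≤ 2 * (1 / 2) ^ m a := by
  have hle : μ (⋃ i, cylL (σ (a + i))) ≤ 2 * (1 / 2) ^ m a :=
    calc μ (⋃ i, cylL (σ (a + i))) ≤ ∑' i, μ (cylL (σ (a + i))) := measure_iUnion_le _
      _ = ∑' i, (1 / 2 : ENNReal) ^ m (a + i) := by simp only [cylL_eq_cyl, hμ, hσ]
      _ ≤ ∑' i, (1 / 2) ^ m a * (1 / 2 : ENNReal) ^ i := by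
        refine ENNReal.tsum_le_tsum fun i => ?_
        rw [← pow_add]
        refine pow_le_pow_right_of_le_one' (by norm_num) ?_
        have := hm.add_le_nat i a
        rw [add_comm i a] at this
        omega
      _ = 2 * (1 / 2) ^ m a := by
        rw [ENNReal.tsum_mul_left, ENNReal.tsum_geometric, one_div, ENNReal.one_sub_inv_two,
          inv_inv, mul_comm]
  simpa [Measure.real, ENNReal.toReal_mul, ENNReal.toReal_pow] using
    ENNReal.toReal_mono (by simp [ENNReal.mul_eq_top]) hle

lemma StrictMono.exists_le_lt_succ {m : ℕ → ℕ} (hm : StrictMono m) {k : ℕ} (hk : m 0 ≤ k) :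
    ∃ n, m n ≤ k ∧ k < m (n + 1) := by
  refine ⟨Nat.findGreatest (fun n => m n ≤ k) k, Nat.findGreatest_spec (P := fun n => m n ≤ k) (Nat.zero_le k) hk, ?_⟩
  by_contra! h
  by_cases hle : Nat.findGreatest (fun n => m n ≤ k) k + 1 ≤ k
  · exact Nat.findGreatest_is_greatest (Nat.lt_succ_self _) hle h
  · have := hm.id_le (Nat.findGreatest (fun n => m n ≤ k) k + 1)
    simp only [id] at this
    omega

lemma tendsto_zero_of_le_on_blocks {m : ℕ → ℕ} (hm : StrictMono m) {u ε : ℕ → ℝ}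
    (hε : Tendsto ε atTop (𝓝 0)) (hu : ∀ k, 0 ≤ u k)
    (hblock : ∀ n k, m n ≤ k → k < m (n + 1) → u k ≤ ε n) : Tendsto u atTop (𝓝 0) := by
  rw [Metric.tendsto_atTop] at hε ⊢
  intro δ hδ
  obtain ⟨N, hN⟩ := hε δ hδ
  refine ⟨m N, fun k hk => ?_⟩
  obtain ⟨n, hnk, hkn⟩ := hm.exists_le_lt_succ ((hm.monotone (Nat.zero_le N)).trans hk)
  have hNn : N ≤ n := Nat.lt_succ_iff.1 (hm.lt_iff_lt.1 (hk.trans_lt hkn))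
  rw [Real.dist_eq, sub_zero, abs_of_nonneg (hu k)]
  exact (hblock n k hnk hkn).trans_lt ((le_abs_self _).trans_lt (by simpa using hN n hNn))

section Supremum

variable {μ : Measure (ℕ → Bool)} [IsFiniteMeasure μ]
  (hμ : ∀ (n : ℕ) (σ : Fin n → Bool), μ (cyl n σ) = (1 / 2 : ENNReal) ^ n)
include hμ

lemma chi_iUnion_inter_cylL_le {m : ℕ → ℕ} (hm : StrictMono m) {σ : ℕ → List Bool}
    (hσ : ∀ n, (σ n).length = m n) (V : ℕ → Set (ℕ → Bool)) {N k : ℕ} (hk : m N ≤ k) :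
    chi μ k (⋃ n, V n ∩ cylL (σ n)) ≤
      ∑ j ∈ Finset.range (N + 1), chi μ k (V j) + 2 * (1 / 2) ^ m (N + 1) := by
  refine (chi_iUnion_le μ k _ (N + 1)).trans ?_
  gcongr with j hj
  · have hj : m j ≤ m N := hm.monotone (Nat.lt_succ_iff.1 (Finset.mem_range.1 hj))
    exact chi_inter_le μ k (cylL_mem_FnAlg_of_length_le ((hσ j).trans_le (hj.trans hk)))
  · exact (measureReal_mono (Set.iUnion_mono fun i => Set.inter_subset_right)).trans
      (measureReal_iUnion_cylL_le hμ hm hσ (N + 1))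

lemma exists_iUnion_inter_cylL_mem_BB {V : ℕ → Set (ℕ → Bool)} (hV : ∀ n, V n ∈ BB μ) :
    ∃ m : ℕ → ℕ, ∀ σ : ℕ → List Bool, (∀ n, (σ n).length = m n) →
      (⋃ n, V n ∩ cylL (σ n)) ∈ BB μ := by
  set g : ℕ → ℕ → ℝ := fun N k => k * ∑ j ∈ Finset.range (N + 1), chi μ k (V j)
  have hg : ∀ N, Tendsto (g N) atTop (𝓝 0) := fun N => by
    simpa [g, Finset.mul_sum] using tendsto_finsetSum (Finset.range (N + 1)) fun j _ => (hV j).2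
  have hgeo : Tendsto (fun k : ℕ => 2 * (k * (1 / 2 : ℝ) ^ k)) atTop (𝓝 0) := by
    simpa using (tendsto_self_mul_const_pow_of_lt_one (r := 1 / 2) (by norm_num) (by norm_num)).const_mul 2
  obtain ⟨m, hm, hmN⟩ := extraction_forall_of_eventually'
    (P := fun N k => ∀ k' ≥ k, g N k' ≤ (1 / 2 : ℝ) ^ N ∧ 2 * (k' * (1 / 2 : ℝ) ^ k') ≤ (1 / 2) ^ N)
    fun N => by
      obtain ⟨M, hM⟩ := eventually_atTop.1 <|
        ((hg N).eventually (eventually_le_nhds (pow_pos (by norm_num : (0 : ℝ) < 1 / 2) N))).and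
          (hgeo.eventually (eventually_le_nhds (pow_pos (by norm_num : (0 : ℝ) < 1 / 2) N)))
      exact ⟨M, fun k hk k' hk' => hM k' (hk.trans hk')⟩
  refine ⟨m, fun σ hσ => ⟨MeasurableSet.iUnion fun n =>
    (hV n).1.inter (isClopen_cylL _).isClosed.measurableSet, ?_⟩⟩
  refine tendsto_zero_of_le_on_blocks hm (ε := fun N => 2 * (1 / 2 : ℝ) ^ N) ?_
    (fun k => mul_nonneg k.cast_nonneg (chi_nonneg μ k _)) fun N k hNk hkN => ?_
  · simpa using (tendsto_pow_atTop_nhds_zero_of_lt_one (r := (1 / 2 : ℝ)) (by norm_num) (by norm_num)).const_mul 2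
  have hkN' : (k : ℝ) ≤ m (N + 1) := by exact_mod_cast hkN.le
  calc (k : ℝ) * chi μ k (⋃ n, V n ∩ cylL (σ n))
      ≤ k * (∑ j ∈ Finset.range (N + 1), chi μ k (V j) + 2 * (1 / 2) ^ m (N + 1)) := by
        gcongr
        exact chi_iUnion_inter_cylL_le hμ hm hσ V hNk
    _ ≤ g N k + 2 * (m (N + 1) * (1 / 2 : ℝ) ^ m (N + 1)) := by
        rw [mul_add, mul_left_comm]
        exact add_le_add le_rfl (by gcongr)
    _ ≤ (1 / 2) ^ N + (1 / 2) ^ (N + 1) :=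
        add_le_add (hmN N k hNk).1 (hmN (N + 1) (m (N + 1)) le_rfl).2
    _ ≤ 2 * (1 / 2) ^ N := by
        rw [pow_succ]
        linarith [pow_nonneg (by norm_num : (0 : ℝ) ≤ 1 / 2) N]

end Supremum

namespace IsUltraOn

variable {ℬ q : Set (Set (ℕ → Bool))} (hq : IsUltraOn ℬ q)
include hq

lemma compl_mem_of_notMem {A : Set (ℕ → Bool)} (hA : A ∈ ℬ) (h : A ∉ q) : Aᶜ ∈ q :=
  not_not.1 fun h' => h ((hq.2.2.2 A hA).2 h')

lemma mem_or_mem_of_union_mem {A B : Set (ℕ → Bool)} (hA : A ∈ ℬ) (hB : B ∈ ℬ)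
    (h : A ∪ B ∈ q) : A ∈ q ∨ B ∈ q := by
  refine or_iff_not_imp_left.2 fun hAq => ?_
  refine hq.2.1 _ (hq.2.2.1 _ h _ (hq.compl_mem_of_notMem hA hAq)) _ hB ?_
  rintro x ⟨hx | hx, hxA⟩
  · exact absurd hx hxA
  · exact hx

lemma exists_length_eq_inter_cylL_mem (hcompl : ∀ A ∈ ℬ, Aᶜ ∈ ℬ)
    (hunion : ∀ A ∈ ℬ, ∀ B ∈ ℬ, A ∪ B ∈ ℬ) (hclopen : ∀ U : Set (ℕ → Bool), IsClopen U → U ∈ ℬ)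
    {A : Set (ℕ → Bool)} (hA : A ∈ q) (m : ℕ) :
    ∃ s : List Bool, s.length = m ∧ A ∩ cylL s ∈ q := by
  induction m with
  | zero => exact ⟨[], rfl, by simpa using hA⟩
  | succ m ih =>
    obtain ⟨s, hs, hAs⟩ := ih
    have hmem : ∀ b : Bool, A ∩ cylL (s ++ [b]) ∈ ℬ := fun b => by
      rw [← compl_compl (A ∩ _), Set.compl_inter]
      exact hcompl _ (hunion _ (hcompl _ (hq.1 hA)) _ (hcompl _ (hclopen _ (isClopen_cylL _))))
    rw [cylL_eq_union_append, Set.inter_union_distrib_left] at hAs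
    rcases hq.mem_or_mem_of_union_mem (hmem false) (hmem true) hAs with h | h
    · exact ⟨s ++ [false], by simp [hs], h⟩
    · exact ⟨s ++ [true], by simp [hs], h⟩

end IsUltraOn

theorem antichain_supremum_in_BB_general
    (lam : Measure (ℕ → Bool)) [IsProbabilityMeasure lam]
    (hlam : ∀ (n : ℕ) (σ : Fin n → Bool), lam (cyl n σ) = (1 / 2 : ENNReal) ^ n)
    (ℬ : Set (Set (ℕ → Bool)))
    (hcompl : ∀ A ∈ ℬ, Aᶜ ∈ ℬ)
    (hunion : ∀ A ∈ ℬ, ∀ B ∈ ℬ, A ∪ B ∈ ℬ)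
    (hclopen : ∀ U : Set (ℕ → Bool), IsClopen U → U ∈ ℬ)
    (hsub : ℬ ⊆ BB lam)
    (q : ℕ → Set (Set (ℕ → Bool)))
    (hq : ∀ n, IsUltraOn ℬ (q n))
    (V : ℕ → Set (ℕ → Bool))
    (hVmem : ∀ n, V n ∈ ℬ)
    (hVq : ∀ n, V n ∈ q n) :
    ∃ σ : ℕ → List Bool,
      (∀ n, V n ∩ cylL (σ n) ∈ q n) ∧
      (⋃ n, V n ∩ cylL (σ n)) ∈ BB lam := by
  obtain ⟨m, hm⟩ := exists_iUnion_inter_cylL_mem_BB hlam fun n => hsub (hVmem n)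
  choose σ hσ hσq using fun n =>
    (hq n).exists_length_eq_inter_cylL_mem hcompl hunion hclopen (hVq n) (m n)
  exact ⟨σ, hσq, hm σ hσ⟩

theorem antichain_supremum_in_BB
    (lam : Measure (ℕ → Bool)) [IsProbabilityMeasure lam]
    (hlam : ∀ (n : ℕ) (σ : Fin n → Bool), lam (cyl n σ) = (1 / 2 : ENNReal) ^ n)
    (ℬ : Set (Set (ℕ → Bool)))
    (hcount : ℬ.Countable)
    (hcompl : ∀ A ∈ ℬ, Aᶜ ∈ ℬ)
    (hunion : ∀ A ∈ ℬ, ∀ B ∈ ℬ, A ∪ B ∈ ℬ)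
    (hclopen : ∀ U : Set (ℕ → Bool), IsClopen U → U ∈ ℬ)
    (hsub : ℬ ⊆ BB lam)
    (q : ℕ → Set (Set (ℕ → Bool)))
    (hq : ∀ n, IsUltraOn ℬ (q n))
    (V : ℕ → Set (ℕ → Bool))
    (hVmem : ∀ n, V n ∈ ℬ)
    (hVne : ∀ n, V n ≠ ∅)
    (hVdisj : ∀ i j, i ≠ j → V i ∩ V j = ∅)
    (hVq : ∀ n, V n ∈ q n) :
    ∃ σ : ℕ → List Bool,
      (∀ n, V n ∩ cylL (σ n) ∈ q n) ∧
      (⋃ n, V n ∩ cylL (σ n)) ∈ BB lam :=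
  antichain_supremum_in_BB_general lam hlam ℬ hcompl hunion hclopen hsub q hq V hVmem hVq
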